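/- Fix α > 1/2 and define M_α(p) = ⌊√p / (log p)^α⌋. The set of primes p such that p ∤ num(B_{2k}) for all even 2 ≤ 2k ≤ min(M_α(p), p-3) has natural density one within the primes: the count of exceptional primes up to X is o(X/log X). -/

import Mathlib

/-!
Exceptional primes `p ≤ √X` number at most `√X + 1`. An exceptional prime `√X < p ≤ X` divides
`num(B_{2k})` for some `k ≥ 1` with `2k ≤ M := √X / (log X / 2)^α`. Von Staudt–Clausen makes
`(2k+1)! B_{2k}` an integer and `ζ(2k) ≤ ζ(2)` gives `|B_{2k}| ≤ (2k)!`, so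
`|num(B_{2k})| ≤ (2k+1)!²` has at most `4 (2k + 1)` prime factors above `√X`. Summing over
`k ≤ M / 2` leaves `O(M²) = O(X / (log X)^{2α})` primes, which is `o(X / log X)` because `2α > 1`.
-/

open Real

/-- A prime `p` is `m`-regular if `p ∤ num(B_{2k})` for all even `2 ≤ 2k ≤ min(m, p-3)`. -/
def IsMRegular (m p : ℕ) : Prop :=
  ∀ k : ℕ, 2 ≤ 2 * k → 2 * k ≤ min m (p - 3) → ¬ ((p : ℤ) ∣ (bernoulli (2 * k)).num)

noncomputable def Mfloor (α : ℝ) (p : ℕ) : ℕ := ⌊Real.sqrt p / Real.log p ^ α⌋₊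

open Finset Filter Asymptotics Topology
open scoped Nat

theorem bernoulli_two_mul_ne_zero {k : ℕ} (hk : k ≠ 0) : bernoulli (2 * k) ≠ 0 := by
  intro h
  have hv := hasSum_zeta_nat hk
  rw [h] at hv
  have h1 := le_hasSum hv 1 fun n _ => by positivity
  norm_num at h1

-- `ζ(2k) = 2^(2k-1) π^(2k) |B_{2k}| / (2k)!` and `ζ(2k) ≤ ζ(2) = π² / 6`.
theorem abs_bernoulli_two_mul_le (k : ℕ) : |bernoulli (2 * k)| ≤ (2 * k)! := by
  rcases eq_or_ne k 0 with rfl | hk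
  · simp
  have hterm (n : ℕ) : 1 / (n : ℝ) ^ (2 * k) ≤ 1 / (n : ℝ) ^ 2 := by
    rcases n.eq_zero_or_pos with rfl | hn
    · simp [hk]
    · exact one_div_le_one_div_of_le (by positivity)
        (pow_le_pow_right₀ (by exact_mod_cast hn) (by omega))
  have hv := hasSum_zeta_nat hk
  have hle := hasSum_le hterm hv hasSum_zeta_two
  rw [← abs_of_nonneg (hv.nonneg fun n => by positivity)] at hle
  simp only [abs_div, abs_mul, abs_pow, abs_neg, abs_one, one_pow, one_mul, abs_two,
    abs_of_pos pi_pos, Nat.abs_cast] at hle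
  rw [div_le_iff₀ (by positivity)] at hle
  have hpi : π ^ 2 / 6 ≤ 2 ^ (2 * k - 1) * π ^ (2 * k) := calc
    π ^ 2 / 6 ≤ π ^ 2 := by linarith [sq_nonneg π]
    _ ≤ π ^ (2 * k) := pow_le_pow_right₀ (by linarith [pi_gt_three]) (by omega)
    _ ≤ 2 ^ (2 * k - 1) * π ^ (2 * k) :=
        le_mul_of_one_le_left (by positivity) (one_le_pow₀ one_le_two)
  have key : 2 ^ (2 * k - 1) * π ^ (2 * k) * |(bernoulli (2 * k) : ℝ)| ≤
      2 ^ (2 * k - 1) * π ^ (2 * k) * (2 * k)! := by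
    nlinarith [(by positivity : (0 : ℝ) < (2 * k)!)]
  exact_mod_cast le_of_mul_le_mul_left key (by positivity)

theorem exists_factorial_mul_bernoulli_two_mul_eq (k : ℕ) :
    ∃ z : ℤ, ((2 * k + 1)! : ℚ) * bernoulli (2 * k) = z := by
  obtain ⟨m, hm⟩ := Bernoulli.vonStaudt_clausen k
  refine ⟨(2 * k + 1)! * m - ∑ p ∈ range (2 * k + 2) with p.Prime ∧ (p - 1) ∣ 2 * k,
    (((2 * k + 1)! / p : ℕ) : ℤ), ?_⟩
  have hterm : ∀ p ∈ (range (2 * k + 2)).filter (fun p => p.Prime ∧ (p - 1) ∣ 2 * k),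
      ((2 * k + 1)! : ℚ) * (1 / p) = (((2 * k + 1)! / p : ℕ) : ℚ) := by
    intro p hp
    simp only [mem_filter, mem_range] at hp
    rw [Nat.cast_div (Nat.dvd_factorial hp.2.1.pos (by omega))
      (by exact_mod_cast hp.2.1.ne_zero)]
    ring
  simp only [Int.cast_sub, Int.cast_mul, Int.cast_sum, Int.cast_natCast]
  rw [hm, mul_add, mul_sum, sum_congr rfl hterm]
  ring

theorem natAbs_num_bernoulli_two_mul_le (k : ℕ) :
    (bernoulli (2 * k)).num.natAbs ≤ (2 * k + 1)! ^ 2 := by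
  obtain ⟨z, hz⟩ := exists_factorial_mul_bernoulli_two_mul_eq k
  have hB : bernoulli (2 * k) = Rat.divInt z (2 * k + 1)! := by
    rw [Rat.divInt_eq_div, ← hz]
    push_cast
    field_simp
  rcases eq_or_ne z 0 with rfl | hz0
  · simp [hB]
  have hzB : (z.natAbs : ℚ) = (2 * k + 1)! * |bernoulli (2 * k)| := by
    rw [Nat.cast_natAbs, Int.cast_abs, ← hz]
    simp [abs_mul]
  calc (bernoulli (2 * k)).num.natAbs ≤ z.natAbs :=
        Int.natAbs_le_of_dvd_ne_zero (hB ▸ Rat.num_dvd z (by positivity)) hz0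
    _ ≤ (2 * k + 1)! * (2 * k)! := by
        have := mul_le_mul_of_nonneg_left (abs_bernoulli_two_mul_le k)
          (by positivity : (0 : ℚ) ≤ (2 * k + 1)!)
        exact_mod_cast hzB ▸ this
    _ ≤ (2 * k + 1)! ^ 2 := by
        rw [sq]
        gcongr
        omega

theorem card_mul_log_le_log_of_forall_prime_dvd {s : Finset ℕ} {N : ℕ} (hN : N ≠ 0) {Y : ℝ}
    (hY : 0 < Y) (h : ∀ p ∈ s, p.Prime ∧ Y ≤ p ∧ p ∣ N) : #s * log Y ≤ log N := by
  have hprod : ∏ p ∈ s, p ≤ N := Nat.le_of_dvd (Nat.pos_of_ne_zero hN)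
    (prod_primes_dvd N (fun p hp => (h p hp).1.prime) fun p hp => (h p hp).2.2)
  have hpow : Y ^ #s ≤ N := calc
    Y ^ #s = ∏ p ∈ s, Y := (prod_const Y).symm
    _ ≤ ∏ p ∈ s, (p : ℝ) := prod_le_prod (fun _ _ => hY.le) fun p hp => (h p hp).2.1
    _ ≤ N := by rw [← Nat.cast_prod]; exact_mod_cast hprod
  calc #s * log Y = log (Y ^ #s) := (log_pow _ _).symm
    _ ≤ log N := log_le_log (by positivity) hpow

theorem card_mul_log_le_of_forall_prime_dvd_bernoulli {k : ℕ} (hk : k ≠ 0) {s : Finset ℕ}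
    {Y : ℝ} (hY : 0 < Y) (h : ∀ p ∈ s, p.Prime ∧ Y ≤ p ∧ (p : ℤ) ∣ (bernoulli (2 * k)).num) :
    #s * log Y ≤ 2 * (2 * k + 1) * log (2 * k + 1) := by
  have hN : (bernoulli (2 * k)).num.natAbs ≠ 0 := by simpa using bernoulli_two_mul_ne_zero hk
  have hNle : (bernoulli (2 * k)).num.natAbs ≤ (2 * k + 1) ^ (2 * (2 * k + 1)) := calc
    _ ≤ (2 * k + 1)! ^ 2 := natAbs_num_bernoulli_two_mul_le k
    _ ≤ ((2 * k + 1) ^ (2 * k + 1)) ^ 2 := by gcongr; exact Nat.factorial_le_pow _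
    _ = (2 * k + 1) ^ (2 * (2 * k + 1)) := by ring
  calc #s * log Y ≤ log (bernoulli (2 * k)).num.natAbs :=
        card_mul_log_le_log_of_forall_prime_dvd hN hY fun p hp =>
          ⟨(h p hp).1, (h p hp).2.1, Int.natCast_dvd.mp (h p hp).2.2⟩
    _ ≤ log (((2 * k + 1) ^ (2 * (2 * k + 1)) : ℕ) : ℝ) :=
        log_le_log (by positivity) (by exact_mod_cast hNle)
    _ = 2 * (2 * k + 1) * log (2 * k + 1) := by push_cast; rw [log_pow]; push_cast; ring

theorem Mfloor_le {α X : ℝ} (hα : 0 ≤ α) (hX : 1 < X) {p : ℕ} (hp : √X < p) (hpX : (p : ℝ) ≤ X) :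
    (Mfloor α p : ℝ) ≤ √X / (log X / 2) ^ α := by
  have hL : 0 < log X / 2 := half_pos (log_pos hX)
  have hLp : log X / 2 ≤ log p := by
    rw [← log_sqrt (by linarith)]
    exact log_le_log (sqrt_pos.2 (by linarith)) hp.le
  calc (Mfloor α p : ℝ) ≤ √p / log p ^ α :=
        Nat.floor_le (div_nonneg (sqrt_nonneg _) (rpow_nonneg (hL.le.trans hLp) α))
    _ ≤ √X / (log X / 2) ^ α := div_le_div₀ (sqrt_nonneg _) (sqrt_le_sqrt hpX)
        (rpow_pos_of_pos hL α) (rpow_le_rpow hL.le hLp hα)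

theorem exists_dvd_bernoulli_of_not_isMRegular {m p : ℕ} (h : ¬ IsMRegular m p) :
    ∃ k, k ≠ 0 ∧ 2 * k ≤ m ∧ (p : ℤ) ∣ (bernoulli (2 * k)).num := by
  simp only [IsMRegular, not_forall, not_not] at h
  obtain ⟨k, hk, hkm, hdvd⟩ := h
  exact ⟨k, by omega, hkm.trans (min_le_left _ _), hdvd⟩

theorem card_not_isMRegular_of_sqrt_lt_le {α X : ℝ} (hα : 0 ≤ α) (hX : exp 2 ≤ X)
    {T : Finset ℕ} (hT : ∀ p ∈ T, p.Prime ∧ √X < p ∧ (p : ℝ) ≤ X ∧ ¬ IsMRegular (Mfloor α p) p) :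
    (#T : ℝ) ≤ 2 * (√X / (log X / 2) ^ α) * (√X / (log X / 2) ^ α + 1) := by
  set L := log X / 2
  set M := √X / L ^ α
  have hX3 : 3 ≤ X := by linarith [add_one_le_exp 2]
  have hL : 1 ≤ L := by
    have := (le_log_iff_exp_le (by linarith)).2 hX
    simp only [L]; linarith
  have hsqrt : √X * √X = X := mul_self_sqrt (by linarith)
  have hsqrt0 : 0 < √X := sqrt_pos.2 (by linarith)
  have hM0 : 0 ≤ M := by positivity
  have hMX : M + 1 ≤ X := by
    have : M ≤ √X := div_le_self hsqrt0.le (one_le_rpow hL hα)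
    nlinarith
  set K := ⌊M / 2⌋₊
  set Tk := fun k : ℕ => T.filter fun p : ℕ => (p : ℤ) ∣ (bernoulli (2 * k)).num
  have hcover : T ⊆ (Icc 1 K).biUnion Tk := by
    intro p hp
    obtain ⟨-, hsqrtp, hpX, hreg⟩ := hT p hp
    obtain ⟨k, hk, hkm, hdvd⟩ := exists_dvd_bernoulli_of_not_isMRegular hreg
    have h2k : (2 * k : ℝ) ≤ M := (by exact_mod_cast hkm : (2 * k : ℝ) ≤ Mfloor α p).trans
      (Mfloor_le hα (by linarith) hsqrtp hpX)
    exact mem_biUnion.2 ⟨k, mem_Icc.2 ⟨by omega, Nat.le_floor (by linarith)⟩,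
      mem_filter.2 ⟨hp, hdvd⟩⟩
  have hTk : ∀ k ∈ Icc 1 K, (#(Tk k) : ℝ) ≤ 4 * (M + 1) := by
    intro k hk
    have hkM : (2 * k + 1 : ℝ) ≤ M + 1 := by
      have := Nat.floor_le (by positivity : 0 ≤ M / 2)
      have : (k : ℝ) ≤ K := by exact_mod_cast (mem_Icc.1 hk).2
      linarith
    have hcount := card_mul_log_le_of_forall_prime_dvd_bernoulli (s := Tk k)
      (Nat.one_le_iff_ne_zero.1 (mem_Icc.1 hk).1) hsqrt0 fun p hp => by
        obtain ⟨hpT, hdvd⟩ := mem_filter.1 hp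
        exact ⟨(hT p hpT).1, (hT p hpT).2.1.le, hdvd⟩
    have hlog : log (2 * k + 1) ≤ 2 * L := by
      simp only [L]
      linarith [log_le_log (by positivity) (hkM.trans hMX)]
    rw [log_sqrt (by linarith)] at hcount
    have : (#(Tk k) : ℝ) * L ≤ 4 * (M + 1) * L := calc
      _ ≤ 2 * (2 * k + 1) * log (2 * k + 1) := hcount
      _ ≤ 2 * (M + 1) * (2 * L) := by
          gcongr
          exact log_nonneg (by linarith [k.cast_nonneg (α := ℝ)])
      _ = 4 * (M + 1) * L := by ring
    exact le_of_mul_le_mul_right this (by linarith)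
  calc (#T : ℝ) ≤ ∑ k ∈ Icc 1 K, (#(Tk k) : ℝ) := by
        exact_mod_cast (card_le_card hcover).trans card_biUnion_le
    _ ≤ K * (4 * (M + 1)) := by
        simpa [nsmul_eq_mul] using sum_le_card_nsmul _ _ _ hTk
    _ ≤ M / 2 * (4 * (M + 1)) := by gcongr; exact Nat.floor_le (by positivity)
    _ = 2 * M * (M + 1) := by ring

theorem card_filter_natCast_le_le (s : Finset ℕ) {Y : ℝ} (hY : 0 ≤ Y) :
    (#(s.filter fun n : ℕ => (n : ℝ) ≤ Y) : ℝ) ≤ Y + 1 := by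
  have hsub : s.filter (fun n : ℕ => (n : ℝ) ≤ Y) ⊆ range (⌊Y⌋₊ + 1) := fun n hn =>
    mem_range.2 (Nat.lt_succ_of_le (Nat.le_floor (mem_filter.1 hn).2))
  calc (#(s.filter fun n : ℕ => (n : ℝ) ≤ Y) : ℝ) ≤ ⌊Y⌋₊ + 1 := by
        exact_mod_cast (card_le_card hsub).trans_eq (card_range _)
    _ ≤ Y + 1 := by linarith [Nat.floor_le hY]

theorem card_not_isMRegular_le {α X : ℝ} (hα : 0 ≤ α) (hX : exp 2 ≤ X) {s : Finset ℕ}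
    (hs : ∀ p ∈ s, p.Prime ∧ (p : ℝ) ≤ X ∧ ¬ IsMRegular (Mfloor α p) p) :
    (#s : ℝ) ≤ 4 * √X + 2 * (X / ((log X / 2) ^ α) ^ 2) := by
  set M := √X / (log X / 2) ^ α
  have hX1 : 1 ≤ X := by linarith [add_one_le_exp 2]
  have hsqrt1 : 1 ≤ √X := one_le_sqrt.2 hX1
  have hL : 1 ≤ log X / 2 := by
    have := (le_log_iff_exp_le (by linarith)).2 hX
    linarith
  have hMX : M ≤ √X := div_le_self (by positivity) (one_le_rpow hL hα)
  have hM2 : M ^ 2 = X / ((log X / 2) ^ α) ^ 2 := by rw [div_pow, sq_sqrt (by linarith)]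
  have hsmall := card_filter_natCast_le_le s (sqrt_nonneg X)
  have hlarge : (#(s.filter fun p : ℕ => ¬ (p : ℝ) ≤ √X) : ℝ) ≤ 2 * M * (M + 1) :=
    card_not_isMRegular_of_sqrt_lt_le hα hX fun p hp => by
      obtain ⟨hps, hpX⟩ := mem_filter.1 hp
      obtain ⟨hprime, hp, hreg⟩ := hs p hps
      exact ⟨hprime, not_le.1 hpX, hp, hreg⟩
  rw [← card_filter_add_card_filter_not fun p : ℕ => (p : ℝ) ≤ √X, Nat.cast_add, ← hM2]
  nlinarith

theorem isLittleO_self_div_of_tendsto_log_div {h : ℝ → ℝ}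
    (hh : Tendsto (fun X => log X / h X) atTop (𝓝 0)) :
    (fun X => X / h X) =o[atTop] fun X => X / log X := by
  have := (isBigO_refl (fun X => X / log X) atTop).mul_isLittleO ((isLittleO_one_iff ℝ).2 hh)
  simp only [mul_one] at this
  refine this.congr' ?_ EventuallyEq.rfl
  filter_upwards [eventually_gt_atTop 1] with X hX
  exact div_mul_div_cancel₀ (log_pos hX).ne'

theorem tendsto_log_div_sqrt_atTop : Tendsto (fun X => log X / √X) atTop (𝓝 0) := by
  simpa [sqrt_eq_rpow] using
    (isLittleO_log_rpow_atTop (by norm_num : (0 : ℝ) < 1 / 2)).tendsto_div_nhds_zero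

theorem tendsto_log_div_rpow_half_log_sq_atTop {α : ℝ} (hα : 1 / 2 < α) :
    Tendsto (fun X => log X / ((log X / 2) ^ α) ^ 2) atTop (𝓝 0) := by
  have hlim := ((tendsto_rpow_neg_atTop (by linarith : 0 < 2 * α - 1)).comp
    (tendsto_log_atTop.atTop_div_const two_pos)).const_mul 2
  rw [mul_zero] at hlim
  refine hlim.congr' ?_
  filter_upwards [eventually_gt_atTop 1] with X hX
  have hL : 0 < log X / 2 := half_pos (log_pos hX)
  rw [Function.comp_apply, rpow_neg hL.le, ← rpow_natCast, ← rpow_mul hL.le,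
    show α * ((2 : ℕ) : ℝ) = (2 * α - 1) + 1 by push_cast; ring, rpow_add_one hL.ne']
  have := (log_pos hX).ne'
  field_simp

open Classical in
theorem stmt_16 (α : ℝ) (hα : 1 / 2 < α) :
    ∀ ε : ℝ, 0 < ε → ∃ X₀ : ℝ, ∀ X : ℝ, X₀ ≤ X →
      (((Finset.range (⌊X⌋₊ + 1)).filter
          (fun p : ℕ => p.Prime ∧ (p : ℝ) ≤ X ∧ ¬ IsMRegular (Mfloor α p) p)).card : ℝ) ≤
        ε * X / Real.log X := by
  intro ε hε
  have hbound : (fun X => 4 * √X + 2 * (X / ((log X / 2) ^ α) ^ 2)) =o[atTop]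
      fun X => X / log X :=
    (((isLittleO_self_div_of_tendsto_log_div tendsto_log_div_sqrt_atTop).congr_left
        fun _ => div_sqrt).const_mul_left 4).add
      ((isLittleO_self_div_of_tendsto_log_div
        (tendsto_log_div_rpow_half_log_sq_atTop hα)).const_mul_left 2)
  obtain ⟨X₀, hX₀⟩ := eventually_atTop.1 ((hbound.def hε).and (eventually_ge_atTop (exp 2)))
  refine ⟨X₀, fun X hX => ?_⟩
  obtain ⟨hle, hX2⟩ := hX₀ X hX
  have hX1 : 1 ≤ X := by linarith [add_one_le_exp 2]
  calc _ ≤ 4 * √X + 2 * (X / ((log X / 2) ^ α) ^ 2) :=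
        card_not_isMRegular_le (by linarith) hX2 fun p hp => (mem_filter.1 hp).2
    _ ≤ ε * ‖X / log X‖ := (le_norm_self _).trans hle
    _ = ε * X / log X := by
        rw [norm_of_nonneg (div_nonneg (by linarith) (log_nonneg hX1)), mul_div_assoc]
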